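/- One has L ∩ τL = {0} and L[τ] = L ⊕ τL as ℤ-modules. -/

import Mathlib

/-!
Galois conjugation `√5 ↦ -√5` applied to the coordinates, combined with swapping the `j`- and
`k`-coordinates, is a `conjK`-semilinear map fixing the generators of `L`, hence all of `L`.
If `τ • y ∈ L` with `y ∈ L`, applying it gives `τ • y = (1 - τ) • y`, i.e. `√5 • y = 0`.
The sum `L + τL` is `L[τ]` because the closure of a union is the join of the closures.
-/

open Polynomial Quaternion

noncomputable section

set_option maxRecDepth 8000
set_option synthInstance.maxHeartbeats 1000000
set_option maxHeartbeats 1000000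

def f5 : ℚ[X] := X ^ 2 - C 5

instance f5_irred : Fact (Irreducible f5) := ⟨by
  unfold f5
  apply X_pow_sub_C_irreducible_of_prime Nat.prime_two
  intro b hb
  have h5 : Irrational (Real.sqrt 5) := (Nat.prime_five).irrational_sqrt
  have hb' : ((b : ℝ)) ^ 2 = 5 := by exact_mod_cast congrArg (fun q : ℚ => (q : ℝ)) hb
  have heq : Real.sqrt 5 = |(b : ℝ)| := by
    rw [← hb', Real.sqrt_sq_eq_abs]
  rw [heq] at h5
  exact h5 ⟨|b|, by push_cast; ring⟩⟩

abbrev K : Type := AdjoinRoot f5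

instance : Field K := inferInstance
instance : SMul K (Quaternion K) := inferInstance
instance : Algebra K (Quaternion K) := inferInstance

def sqrt5 : K := AdjoinRoot.root f5

lemma sqrt5_sq : sqrt5 ^ 2 = 5 := by
  have h : eval₂ (AdjoinRoot.of f5) (AdjoinRoot.root f5) (X ^ 2 - C 5) = 0 :=
    AdjoinRoot.eval₂_root f5
  rw [eval₂_sub, eval₂_pow, eval₂_X, eval₂_C, sub_eq_zero] at h
  show AdjoinRoot.root f5 ^ 2 = 5
  rw [h]
  simp

def conjK : K →+* K :=
  AdjoinRoot.lift (algebraMap ℚ K) (-sqrt5) (by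
    simp only [f5, eval₂_sub, eval₂_pow, eval₂_X, eval₂_C, sub_eq_zero]
    have h : (-sqrt5) ^ 2 = sqrt5 ^ 2 := by ring
    rw [h, sqrt5_sq]
    simp)

def τ : K := (1 + sqrt5) / 2

abbrev ℍK := Quaternion K

def twist (x : ℍK) : ℍK := ⟨conjK x.re, conjK x.imI, conjK x.imK, conjK x.imJ⟩

def icoB : Fin 4 → ℍK :=
  ![1, ⟨0,1,0,0⟩, ⟨1/2,1/2,1/2,1/2⟩, ⟨(1-τ)/2, τ/2, 0, 1/2⟩]

def Ico : AddSubgroup ℍK :=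
  AddSubgroup.closure (Set.range icoB ∪ Set.range fun i => τ • icoB i)

def lB : Fin 4 → ℍK :=
  ![1, ⟨-(1/2),1/2,1/2,1/2⟩, ⟨0,-1,0,0⟩, ⟨0,1/2,(τ-1)/2,-(τ/2)⟩]

def LatA4 : AddSubgroup ℍK := AddSubgroup.closure (Set.range lB)

def LatATau : AddSubgroup ℍK :=
  AddSubgroup.closure (Set.range lB ∪ Set.range fun i => τ • lB i)


def tauLat : AddSubgroup ℍK := LatA4.map (DistribMulAction.toAddMonoidHom ℍK τ)

theorem AddSubgroup.inf_map_smul_eq_bot_of_fixed_by_semilinear {R M : Type*} [DivisionRing R]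
    [AddCommGroup M] [Module R M] {σ : R →+* R} (T : M →ₛₗ[σ] M) {L : AddSubgroup M}
    (hT : ∀ x ∈ L, T x = x) {c : R} (hc : σ c ≠ c) :
    L ⊓ L.map (DistribSMul.toAddMonoidHom M c) = ⊥ := by
  rw [AddSubgroup.eq_bot_iff_forall]
  rintro _ ⟨hcyL, y, hyL, rfl⟩
  replace hcyL : c • y ∈ L := hcyL
  change c • y = 0
  have hcy : c • y = σ c • y := by rw [← hT _ hcyL, T.map_smulₛₗ, hT y hyL]
  have hy : (c - σ c) • y = 0 := by rw [sub_smul, hcy, sub_self]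
  rw [(smul_eq_zero.mp hy).resolve_left (sub_ne_zero.mpr hc.symm), smul_zero]

lemma conjK_sqrt5 : conjK sqrt5 = -sqrt5 := by
  simp [conjK, sqrt5, AdjoinRoot.lift_root]

lemma conjK_tau : conjK τ = 1 - τ := by
  simp only [τ, map_div₀, map_add, map_one, conjK_sqrt5, map_ofNat]
  ring

lemma sqrt5_ne_zero : sqrt5 ≠ 0 := fun h => by simpa [h] using sqrt5_sq

lemma conjK_tau_ne_tau : conjK τ ≠ τ := by
  rw [conjK_tau]
  intro h
  apply sqrt5_ne_zero
  simp only [τ] at h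
  linear_combination -h

def twistₛₗ : ℍK →ₛₗ[conjK] ℍK where
  toFun := twist
  map_add' _ _ := by ext <;> exact map_add conjK _ _
  map_smul' _ _ := by ext <;> exact map_mul conjK _ _

lemma twist_lB (i : Fin 4) : twist (lB i) = lB i := by
  fin_cases i <;> ext <;> simp [twist, lB, conjK_tau, map_ofNat conjK 2] <;> ring

lemma twist_eq_self_of_mem_LatA4 : ∀ x ∈ LatA4, twist x = x := by
  have hle : LatA4 ≤ AddMonoidHom.eqLocus twistₛₗ.toAddMonoidHom (AddMonoidHom.id ℍK) := by
    rw [LatA4, AddSubgroup.closure_le]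
    rintro _ ⟨i, rfl⟩
    exact twist_lB i
  exact fun _ hx => hle hx

/-- L ∩ τL = {0} and L[τ] = L ⊕ τL as ℤ-modules. -/
theorem L_inter_tauL_and_direct_sum :
    LatA4 ⊓ tauLat = ⊥ ∧ LatA4 ⊔ tauLat = LatATau := by
  refine ⟨AddSubgroup.inf_map_smul_eq_bot_of_fixed_by_semilinear twistₛₗ
    twist_eq_self_of_mem_LatA4 conjK_tau_ne_tau, ?_⟩
  rw [LatATau, AddSubgroup.closure_union, tauLat, LatA4, AddMonoidHom.map_closure,
    ← Set.range_comp]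
  rfl
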